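/- Let (μ,ν,λ) ∈ Par_n^3 satisfy every extended Horn inequality. Then for all disjoint subsets X, Y ⊆ [n], the subset-sum inequality 0 ≤ Σ_{i∈X} μ_i + Σ_{i∈Y} ν_i − Σ_{i∈Y} μ_i − Σ_{i∈X} ν_i + Σ_{i=1}^{|X|+|Y|} λ_i holds, and the same holds for every permutation of the roles of μ, ν, λ. -/

import Mathlib

/-- `μ` is a partition with at most `n` parts: a weakly decreasing sequence
`μ 0 ≥ μ 1 ≥ ⋯` of naturals (the paper's part `μ_{i+1}` is `μ i`, i.e. we use
0-indexing) vanishing from index `n` on. -/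
def IsPartitionN (n : ℕ) (μ : ℕ → ℕ) : Prop :=
  Antitone μ ∧ ∀ i, n ≤ i → μ i = 0

/-- The cells `(row, column)` (both 0-indexed) of the skew shape `lam/mu`. -/
def skewCells (lam mu : ℕ → ℕ) : Set (ℕ × ℕ) :=
  {p | mu p.1 ≤ p.2 ∧ p.2 < lam p.1}

/-- `T` is a Littlewood–Richardson skew tableau of shape `lam/mu` and content
`nu`: the shape `mu` is contained in `lam`, rows weakly increase, columns
strictly increase, the (0-indexed) letter `t` occurs `nu t` times, and every
prefix of the reverse reading word (rows read right-to-left, top-to-bottom)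
contains at least as many letters `t` as letters `t+1`. -/
def IsLRTableau (lam mu nu : ℕ → ℕ) (T : ℕ × ℕ → ℕ) : Prop :=
  (∀ i, mu i ≤ lam i) ∧
  (∀ i j j', mu i ≤ j → j ≤ j' → j' < lam i → T (i, j) ≤ T (i, j')) ∧
  (∀ i j, (i, j) ∈ skewCells lam mu → (i + 1, j) ∈ skewCells lam mu →
    T (i, j) < T (i + 1, j)) ∧
  (∀ t, Set.ncard {p ∈ skewCells lam mu | T p = t} = nu t) ∧
  (∀ i j t,
    Set.ncard {p ∈ skewCells lam mu |
        T p = t + 1 ∧ (p.1 < i ∨ (p.1 = i ∧ j ≤ p.2))} ≤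
      Set.ncard {p ∈ skewCells lam mu |
        T p = t ∧ (p.1 < i ∨ (p.1 = i ∧ j ≤ p.2))})

/-- The Littlewood–Richardson coefficient `c^{lam}_{mu,nu}`: the number of
Littlewood–Richardson skew tableaux of shape `lam/mu` and content `nu`
(tableaux are normalized to vanish off the shape). -/
noncomputable def lrCoeff (lam mu nu : ℕ → ℕ) : ℕ :=
  Set.ncard {T : ℕ × ℕ → ℕ | IsLRTableau lam mu nu T ∧
    ∀ p ∉ skewCells lam mu, T p = 0}

/-- The Newell–Littlewood number
`N_{μ,ν,λ} = ∑_{α,β,γ} c^μ_{α,β} c^ν_{α,γ} c^λ_{β,γ}`, realized as the number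
of tuples `((α, β, γ), (T₁, T₂, T₃))` where `α, β, γ` are partitions and
`T₁, T₂, T₃` are Littlewood–Richardson tableaux witnessing the coefficients
`c^μ_{α,β}`, `c^ν_{α,γ}` and `c^λ_{β,γ}` respectively. -/
noncomputable def nlNumber (mu nu lam : ℕ → ℕ) : ℕ :=
  Set.ncard {x : ((ℕ → ℕ) × (ℕ → ℕ) × (ℕ → ℕ)) ×
      ((ℕ × ℕ → ℕ) × (ℕ × ℕ → ℕ) × (ℕ × ℕ → ℕ)) |
    Antitone x.1.1 ∧ Antitone x.1.2.1 ∧ Antitone x.1.2.2 ∧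
    (IsLRTableau mu x.1.1 x.1.2.1 x.2.1 ∧
      ∀ p ∉ skewCells mu x.1.1, x.2.1 p = 0) ∧
    (IsLRTableau nu x.1.1 x.1.2.2 x.2.2.1 ∧
      ∀ p ∉ skewCells nu x.1.1, x.2.2.1 p = 0) ∧
    (IsLRTableau lam x.1.2.1 x.1.2.2 x.2.2.2 ∧
      ∀ p ∉ skewCells lam x.1.2.1, x.2.2.2 p = 0)}

/-- For `I = {i₁ < ⋯ < i_d} ⊆ {0, 1, 2, …}` (the 0-indexed version of the
paper's subsets of positive integers), `tauPartition I` is `τ(I)`, i.e. the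
partition whose (0-indexed) part `t` is `i_{d-t} − (d−t−1) - 1`; for the
paper's 1-indexed sets this is `τ(I) = (i_d − d ≥ ⋯ ≥ i₂ − 2 ≥ i₁ − 1)`. -/
def tauPartition (I : Finset ℕ) : ℕ → ℕ := fun t =>
  if t < I.card then
    (I.sort (· ≤ ·)).getD (I.card - 1 - t) 0 - (I.card - 1 - t)
  else 0

/-- Conditions (I)–(III) defining the set `𝒢_n` of data for the extended Horn
inequalities: all six sets are subsets of `{0, …, n−1}` (the 0-indexed version
of `[n] = {1, …, n}`), `A ∩ A' = B ∩ B' = C ∩ C' = ∅`,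
`|A| = |B'| + |C'|`, `|B| = |A'| + |C'|`, `|C| = |A'| + |B'|`, and there exist
`A₁, A₂, B₁, B₂, C₁, C₂ ⊆ {0, …, n−1}` with `|A₁| = |A₂| = |A'|`,
`|B₁| = |B₂| = |B'|`, `|C₁| = |C₂| = |C'|` such that
`c^{τ(A')}_{τ(A₁),τ(A₂)}, c^{τ(B')}_{τ(B₁),τ(B₂)}, c^{τ(C')}_{τ(C₁),τ(C₂)} > 0`
and `c^{τ(A)}_{τ(B₁),τ(C₂)}, c^{τ(B)}_{τ(C₁),τ(A₂)}, c^{τ(C)}_{τ(A₁),τ(B₂)} > 0`. -/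
def IsExtHornTuple (n : ℕ) (A A' B B' C C' : Finset ℕ) : Prop :=
  A ⊆ Finset.range n ∧ A' ⊆ Finset.range n ∧ B ⊆ Finset.range n ∧
    B' ⊆ Finset.range n ∧ C ⊆ Finset.range n ∧ C' ⊆ Finset.range n ∧
  Disjoint A A' ∧ Disjoint B B' ∧ Disjoint C C' ∧
  A.card = B'.card + C'.card ∧ B.card = A'.card + C'.card ∧
    C.card = A'.card + B'.card ∧
  ∃ A₁ A₂ B₁ B₂ C₁ C₂ : Finset ℕ,
    A₁ ⊆ Finset.range n ∧ A₂ ⊆ Finset.range n ∧ B₁ ⊆ Finset.range n ∧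
      B₂ ⊆ Finset.range n ∧ C₁ ⊆ Finset.range n ∧ C₂ ⊆ Finset.range n ∧
    A₁.card = A'.card ∧ A₂.card = A'.card ∧ B₁.card = B'.card ∧
      B₂.card = B'.card ∧ C₁.card = C'.card ∧ C₂.card = C'.card ∧
    0 < lrCoeff (tauPartition A') (tauPartition A₁) (tauPartition A₂) ∧
    0 < lrCoeff (tauPartition B') (tauPartition B₁) (tauPartition B₂) ∧
    0 < lrCoeff (tauPartition C') (tauPartition C₁) (tauPartition C₂) ∧
    0 < lrCoeff (tauPartition A) (tauPartition B₁) (tauPartition C₂) ∧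
    0 < lrCoeff (tauPartition B) (tauPartition C₁) (tauPartition A₂) ∧
    0 < lrCoeff (tauPartition C) (tauPartition A₁) (tauPartition B₂)

/-- `(μ, ν, lam)` satisfies every extended Horn inequality (with ambient set
`{0, …, n−1}`). -/
def SatisfiesExtHorn (n : ℕ) (μ ν lam : ℕ → ℕ) : Prop :=
  ∀ A A' B B' C C' : Finset ℕ, IsExtHornTuple n A A' B B' C C' →
    (0 : ℤ) ≤ (∑ i ∈ A, (μ i : ℤ)) - (∑ i ∈ A', (μ i : ℤ)) +
      (∑ j ∈ B, (ν j : ℤ)) - (∑ j ∈ B', (ν j : ℤ)) +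
      (∑ k ∈ C, (lam k : ℤ)) - (∑ k ∈ C', (lam k : ℤ))

/-!
Each subset-sum inequality is a single extended Horn inequality. For disjoint `X, Y` and
`k = |X| + |Y|`, take `(A, A', B, B', C, C') = (X, Y, Y, X, [k], ∅)`, or the analogous tuples with
`[k]` in the `B`- or `A`-slot. Since `τ([k]) = ∅`, every Littlewood–Richardson coefficient that
condition (III) then asks for is `c^τ_{τ,∅}` or `c^τ_{∅,τ}`, witnessed by the empty and by the
superstandard tableau. Exchanging `X` and `Y` together with the first two partitions gives the
other three permutations.
-/

theorem finite_setOf_zero_off_finset_lt {α : Type*} (F : Finset α) (N : ℕ) :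
    {T : α → ℕ | (∀ p ∉ F, T p = 0) ∧ ∀ p, T p < N}.Finite := by
  classical
  let extend : (F → Fin N) → α → ℕ := fun f p => if h : p ∈ F then f ⟨p, h⟩ else 0
  refine (Set.finite_range extend).subset ?_
  rintro T ⟨hoff, hlt⟩
  refine ⟨fun q => ⟨T q, hlt q⟩, funext fun p => ?_⟩
  by_cases hp : p ∈ F
  · simp [extend, hp]
  · simp [extend, hp, hoff p hp]

theorem IsLRTableau.lt_of_mem_skewCells {lam mu nu : ℕ → ℕ} {T : ℕ × ℕ → ℕ} {c : ℕ}
    (hT : IsLRTableau lam mu nu T) (hfin : (skewCells lam mu).Finite)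
    (hnu : ∀ t, c ≤ t → nu t = 0) {p : ℕ × ℕ} (hp : p ∈ skewCells lam mu) : T p < c := by
  by_contra! hle
  have hletter : {q ∈ skewCells lam mu | T q = T p}.Nonempty := ⟨p, hp, rfl⟩
  have hpos := (Set.ncard_pos (hfin.subset fun q hq => hq.1)).mpr hletter
  rw [hT.2.2.2.1, hnu _ hle] at hpos
  exact hpos.false

theorem lrCoeff_pos_of_isLRTableau {lam mu nu : ℕ → ℕ} {T : ℕ × ℕ → ℕ} {c : ℕ}
    (hfin : (skewCells lam mu).Finite) (hnu : ∀ t, c ≤ t → nu t = 0)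
    (hT : IsLRTableau lam mu nu T) (hoff : ∀ p ∉ skewCells lam mu, T p = 0) :
    0 < lrCoeff lam mu nu := by
  refine (Set.ncard_pos ?_).mpr ⟨T, hT, hoff⟩
  refine (finite_setOf_zero_off_finset_lt hfin.toFinset (c + 1)).subset ?_
  rintro T' ⟨hT', hoff'⟩
  refine ⟨fun p hp => hoff' p (by simpa using hp), fun p => ?_⟩
  by_cases hp : p ∈ skewCells lam mu
  · exact (hT'.lt_of_mem_skewCells hfin hnu hp).trans (Nat.lt_succ_self c)
  · simp [hoff' p hp]

theorem lrCoeff_self_zero_pos (lam : ℕ → ℕ) : 0 < lrCoeff lam lam 0 := by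
  have hempty : skewCells lam lam = ∅ :=
    Set.eq_empty_of_forall_notMem fun _ hp => lt_irrefl _ (hp.1.trans_lt hp.2)
  refine lrCoeff_pos_of_isLRTableau (T := 0) (c := 0) (by simp [hempty]) (fun _ _ => rfl)
    ⟨fun _ => le_rfl, fun _ _ _ _ _ _ => le_rfl, ?_, fun _ => ?_, fun _ _ _ => ?_⟩ (fun _ _ => rfl)
  all_goals simp [hempty]

def superstandardTableau (π : ℕ → ℕ) : ℕ × ℕ → ℕ :=
  fun p => if p.2 < π p.1 then p.1 else 0

theorem mem_skewCells_zero {π : ℕ → ℕ} {p : ℕ × ℕ} : p ∈ skewCells π 0 ↔ p.2 < π p.1 := by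
  simp [skewCells]

theorem ncard_superstandardTableau_letter (π : ℕ → ℕ) (t : ℕ) (Q : ℕ × ℕ → Prop) :
    {p ∈ skewCells π 0 | superstandardTableau π p = t ∧ Q p}.ncard =
      {b | b < π t ∧ Q (t, b)}.ncard := by
  have hset : {p ∈ skewCells π 0 | superstandardTableau π p = t ∧ Q p} =
      Prod.mk t '' {b | b < π t ∧ Q (t, b)} := by
    ext ⟨i, j⟩
    simp only [mem_skewCells_zero, superstandardTableau, Set.mem_image, Set.mem_ofPred_eq,
      Prod.mk.injEq]
    constructor
    · rintro ⟨hj, hi, hQ⟩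
      rw [if_pos hj] at hi
      subst hi
      exact ⟨j, ⟨hj, hQ⟩, rfl, rfl⟩
    · rintro ⟨b, ⟨hb, hQ⟩, rfl, rfl⟩
      exact ⟨hb, if_pos hb, hQ⟩
  rw [hset, Set.ncard_image_of_injective _ (Prod.mk_right_injective t)]

theorem isLRTableau_superstandardTableau {π : ℕ → ℕ} (hπ : Antitone π) :
    IsLRTableau π 0 π (superstandardTableau π) := by
  refine ⟨fun _ => Nat.zero_le _, ?_, ?_, fun t => ?_, fun i j t => ?_⟩
  · intro i j j' _ hjj' hj'
    simp [superstandardTableau, hj', hjj'.trans_lt hj']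
  · intro i j hij hij'
    rw [mem_skewCells_zero] at hij hij'
    simp [superstandardTableau, hij, hij']
  · have hletter := ncard_superstandardTableau_letter π t fun _ => True
    simp only [and_true] at hletter
    exact hletter.trans (Set.ncard_Iio_nat (π t))
  · rw [ncard_superstandardTableau_letter, ncard_superstandardTableau_letter]
    -- the prefix cells carrying `t + 1` lie directly below prefix cells carrying `t`
    refine Set.ncard_le_ncard ?_ ((Set.finite_Iio (π t)).subset fun b hb => hb.1)
    rintro b ⟨hb, hpre⟩
    exact ⟨hb.trans_le (hπ t.le_succ), by omega⟩

theorem lrCoeff_zero_self_pos {π : ℕ → ℕ} {c : ℕ} (hπ : Antitone π)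
    (hc : ∀ t, c ≤ t → π t = 0) : 0 < lrCoeff π 0 π := by
  have hfin : (skewCells π 0).Finite := by
    refine ((Set.finite_Iio c).prod (Set.finite_Iio (π 0))).subset fun ⟨i, j⟩ hp => ?_
    rw [mem_skewCells_zero] at hp
    refine ⟨Set.mem_Iio.mpr ?_, hp.trans_le (hπ i.zero_le)⟩
    by_contra! hi
    simp [hc i hi] at hp
  refine lrCoeff_pos_of_isLRTableau hfin hc (isLRTableau_superstandardTableau hπ) fun p hp => ?_
  rw [mem_skewCells_zero] at hp
  simp [superstandardTableau, hp]

theorem tauPartition_range (k : ℕ) : tauPartition (Finset.range k) = 0 := by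
  funext t
  simp only [tauPartition, Finset.card_range, Finset.sort_range, Pi.zero_apply]
  split_ifs with ht
  · rw [List.getD_eq_getElem _ _ (by simp; omega)]
    simp
  · rfl

theorem tauPartition_empty : tauPartition ∅ = 0 := tauPartition_range 0

theorem tauPartition_eq_zero_of_card_le (S : Finset ℕ) {t : ℕ} (h : S.card ≤ t) :
    tauPartition S t = 0 := by
  simp [tauPartition, h.not_gt]

theorem tauPartition_antitone (S : Finset ℕ) : Antitone (tauPartition S) := by
  refine antitone_nat_of_succ_le fun t => ?_
  by_cases ht : t + 1 < S.card
  · have hlen : (S.sort (· ≤ ·)).length = S.card := Finset.length_sort _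
    simp only [tauPartition, if_pos ht, if_pos (t.lt_succ_self.trans ht)]
    rw [List.getD_eq_getElem _ _ (by omega), List.getD_eq_getElem _ _ (by omega)]
    have hlt := List.pairwise_iff_getElem.mp S.sortedLT_sort.pairwise
      (S.card - 1 - (t + 1)) (S.card - 1 - t) (by omega) (by omega) (by omega)
    omega
  · simp [tauPartition_eq_zero_of_card_le S (not_lt.mp ht)]

theorem lrCoeff_zero_tauPartition_pos (S : Finset ℕ) :
    0 < lrCoeff (tauPartition S) 0 (tauPartition S) :=
  lrCoeff_zero_self_pos (tauPartition_antitone S) fun _ => tauPartition_eq_zero_of_card_le S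

theorem Equiv.Perm.fin_three_cases (σ : Equiv.Perm (Fin 3)) :
    (σ 0 = 0 ∧ σ 1 = 1 ∧ σ 2 = 2) ∨ (σ 0 = 1 ∧ σ 1 = 0 ∧ σ 2 = 2) ∨
    (σ 0 = 0 ∧ σ 1 = 2 ∧ σ 2 = 1) ∨ (σ 0 = 2 ∧ σ 1 = 0 ∧ σ 2 = 1) ∨
    (σ 0 = 1 ∧ σ 1 = 2 ∧ σ 2 = 0) ∨ (σ 0 = 2 ∧ σ 1 = 1 ∧ σ 2 = 0) := by
  revert σ
  decide

def SubsetSumIneq (f g h : ℕ → ℕ) (X Y : Finset ℕ) : Prop :=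
  (0 : ℤ) ≤ (∑ i ∈ X, (f i : ℤ)) + (∑ i ∈ Y, (g i : ℤ)) - (∑ i ∈ Y, (f i : ℤ)) -
    (∑ i ∈ X, (g i : ℤ)) + ∑ i ∈ Finset.range (X.card + Y.card), (h i : ℤ)

theorem SubsetSumIneq.swap {f g h : ℕ → ℕ} {X Y : Finset ℕ} (hfg : SubsetSumIneq f g h X Y) :
    SubsetSumIneq g f h Y X := by
  unfold SubsetSumIneq at *
  rw [Nat.add_comm]
  linarith

section ExtHornTuples

variable {n : ℕ} {X Y : Finset ℕ}

theorem range_card_add_card_subset (hX : X ⊆ Finset.range n) (hY : Y ⊆ Finset.range n)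
    (hXY : Disjoint X Y) : Finset.range (X.card + Y.card) ⊆ Finset.range n := by
  rw [Finset.range_subset_range, ← Finset.card_union_of_disjoint hXY]
  simpa using Finset.card_le_card (Finset.union_subset hX hY)

theorem range_card_subset (hX : X ⊆ Finset.range n) : Finset.range X.card ⊆ Finset.range n := by
  simpa using Finset.card_le_card hX

variable (hX : X ⊆ Finset.range n) (hY : Y ⊆ Finset.range n) (hXY : Disjoint X Y)
include hX hY hXY

theorem isExtHornTuple_range_third :
    IsExtHornTuple n X Y Y X (Finset.range (X.card + Y.card)) ∅ := by
  refine ⟨hX, hY, hY, hX, range_card_add_card_subset hX hY hXY, Finset.empty_subset _,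
    hXY, hXY.symm, Finset.disjoint_empty_right _, by simp, by simp, by simp [Nat.add_comm],
    Finset.range Y.card, Y, X, Finset.range X.card, ∅, ∅,
    range_card_subset hY, hY, hX, range_card_subset hX, Finset.empty_subset _,
    Finset.empty_subset _, by simp, rfl, rfl, by simp, rfl, rfl, ?_⟩
  simp only [tauPartition_empty, tauPartition_range]
  exact ⟨lrCoeff_zero_tauPartition_pos Y, lrCoeff_self_zero_pos _, lrCoeff_self_zero_pos _,
    lrCoeff_self_zero_pos _, lrCoeff_zero_tauPartition_pos Y, lrCoeff_self_zero_pos _⟩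

theorem isExtHornTuple_range_second :
    IsExtHornTuple n X Y (Finset.range (X.card + Y.card)) ∅ Y X := by
  refine ⟨hX, hY, range_card_add_card_subset hX hY hXY, Finset.empty_subset _, hY, hX,
    hXY, Finset.disjoint_empty_right _, hXY.symm, by simp, by simp [Nat.add_comm], by simp,
    Y, Finset.range Y.card, ∅, ∅, Finset.range X.card, X,
    hY, range_card_subset hY, Finset.empty_subset _, Finset.empty_subset _,
    range_card_subset hX, hX, rfl, by simp, rfl, rfl, by simp, rfl, ?_⟩
  simp only [tauPartition_empty, tauPartition_range]
  exact ⟨lrCoeff_self_zero_pos _, lrCoeff_self_zero_pos _, lrCoeff_zero_tauPartition_pos X,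
    lrCoeff_zero_tauPartition_pos X, lrCoeff_self_zero_pos _, lrCoeff_self_zero_pos _⟩

theorem isExtHornTuple_range_first :
    IsExtHornTuple n (Finset.range (X.card + Y.card)) ∅ X Y Y X := by
  refine ⟨range_card_add_card_subset hX hY hXY, Finset.empty_subset _, hX, hY, hY, hX,
    Finset.disjoint_empty_right _, hXY, hXY.symm, by simp [Nat.add_comm], by simp, by simp,
    ∅, ∅, Finset.range Y.card, Y, X, Finset.range X.card,
    Finset.empty_subset _, Finset.empty_subset _, range_card_subset hY, hY, hX,
    range_card_subset hX, rfl, rfl, by simp, rfl, rfl, by simp, ?_⟩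
  simp only [tauPartition_empty, tauPartition_range]
  exact ⟨lrCoeff_self_zero_pos _, lrCoeff_zero_tauPartition_pos Y, lrCoeff_self_zero_pos _,
    lrCoeff_self_zero_pos _, lrCoeff_self_zero_pos _, lrCoeff_zero_tauPartition_pos Y⟩

theorem subsetSumIneq_of_satisfiesExtHorn {μ ν lam : ℕ → ℕ} (hEH : SatisfiesExtHorn n μ ν lam) :
    SubsetSumIneq μ ν lam X Y ∧ SubsetSumIneq μ lam ν X Y ∧ SubsetSumIneq ν lam μ X Y := by
  have h₁ := hEH _ _ _ _ _ _ (isExtHornTuple_range_third hX hY hXY)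
  have h₂ := hEH _ _ _ _ _ _ (isExtHornTuple_range_second hX hY hXY)
  have h₃ := hEH _ _ _ _ _ _ (isExtHornTuple_range_first hX hY hXY)
  simp only [Finset.sum_empty] at h₁ h₂ h₃
  refine ⟨?_, ?_, ?_⟩ <;> unfold SubsetSumIneq <;> linarith

end ExtHornTuples

theorem subset_sum_of_satisfiesExtHorn_general (n : ℕ) (μ ν lam : ℕ → ℕ)
    (hEH : SatisfiesExtHorn n μ ν lam) (σ : Equiv.Perm (Fin 3))
    (X Y : Finset ℕ) (hX : X ⊆ Finset.range n) (hY : Y ⊆ Finset.range n)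
    (hXY : Disjoint X Y) :
    (0 : ℤ) ≤ (∑ i ∈ X, ((![μ, ν, lam] (σ 0)) i : ℤ)) +
      (∑ i ∈ Y, ((![μ, ν, lam] (σ 1)) i : ℤ)) -
      (∑ i ∈ Y, ((![μ, ν, lam] (σ 0)) i : ℤ)) -
      (∑ i ∈ X, ((![μ, ν, lam] (σ 1)) i : ℤ)) +
      ∑ i ∈ Finset.range (X.card + Y.card), ((![μ, ν, lam] (σ 2)) i : ℤ) := by
  obtain ⟨hlam, hν, hμ⟩ := subsetSumIneq_of_satisfiesExtHorn hX hY hXY hEH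
  obtain ⟨hlam', hν', hμ'⟩ := subsetSumIneq_of_satisfiesExtHorn hY hX hXY.symm hEH
  change SubsetSumIneq (![μ, ν, lam] (σ 0)) (![μ, ν, lam] (σ 1)) (![μ, ν, lam] (σ 2)) X Y
  rcases σ.fin_three_cases with ⟨h0, h1, h2⟩ | ⟨h0, h1, h2⟩ | ⟨h0, h1, h2⟩ | ⟨h0, h1, h2⟩ |
    ⟨h0, h1, h2⟩ | ⟨h0, h1, h2⟩ <;> rw [h0, h1, h2]
  exacts [hlam, hlam'.swap, hν, hν'.swap, hμ, hμ'.swap]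

/-- Proposition 2.5(iii): the extended Horn inequalities imply all
`S₃`-permutations of the subset-sum inequalities.  The permutation `σ`
permutes the roles of `μ, ν, lam`. -/
theorem subset_sum_of_satisfiesExtHorn (n : ℕ) (μ ν lam : ℕ → ℕ)
    (hμ : IsPartitionN n μ) (hν : IsPartitionN n ν) (hlam : IsPartitionN n lam)
    (hEH : SatisfiesExtHorn n μ ν lam) (σ : Equiv.Perm (Fin 3))
    (X Y : Finset ℕ) (hX : X ⊆ Finset.range n) (hY : Y ⊆ Finset.range n)
    (hXY : Disjoint X Y) :
    (0 : ℤ) ≤ (∑ i ∈ X, ((![μ, ν, lam] (σ 0)) i : ℤ)) +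
      (∑ i ∈ Y, ((![μ, ν, lam] (σ 1)) i : ℤ)) -
      (∑ i ∈ Y, ((![μ, ν, lam] (σ 0)) i : ℤ)) -
      (∑ i ∈ X, ((![μ, ν, lam] (σ 1)) i : ℤ)) +
      ∑ i ∈ Finset.range (X.card + Y.card), ((![μ, ν, lam] (σ 2)) i : ℤ) :=
  subset_sum_of_satisfiesExtHorn_general n μ ν lam hEH σ X Y hX hY hXY
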